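/- arXiv:2511.10568 — 2 statements merged into one kernel-verified Lean document; each statement's English description precedes it below -/
import Mathlib

section
/- Let A, B be nonempty compact subsets of the nonnegative orthant of R^n such that A weakly dominates B and A strongly dominates B, i.e., there exist a ∈ A and ε > 0 such that the closed cube [a − ε·1, a] lies in the nonnegative orthant and is disjoint from B^D. If f : R^n_{≥0} → R is continuous and strictly positive everywhere, then ∫_{A^D} f dx > ∫_{B^D} f dx (Lebesgue integrals). -/
open Set MeasureTheory

/-- The positive domination closure of `A` inside the nonnegative orthant. -/
def domClosure {n : ℕ} (A : Set (Fin n → ℝ)) : Set (Fin n → ℝ) :=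
  {x | (∀ i, 0 ≤ x i) ∧ ∃ a ∈ A, ∀ i, x i ≤ a i}

/-- `A` weakly dominates `B`. -/
def weaklyDominates {n : ℕ} (A B : Set (Fin n → ℝ)) : Prop :=
  ∀ b ∈ B, ∃ a ∈ A, ∀ i, b i ≤ a i

/-!
The domination closure of `B` sits inside that of `A`, and the difference contains the cube
`[a - ε·1, a]`, which has positive volume. Both closures are compact (a closed lower closure of a
compact set, cut down to the orthant), so `f` is integrable on them, and a strictly positive
function has strictly positive integral over a set of positive measure.
-/

theorem setIntegral_lt_setIntegral_of_subset {X : Type*} [MeasurableSpace X] {μ : Measure X}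
    {f : X → ℝ} {s t : Set X} (hst : s ⊆ t) (hs : MeasurableSet s) (hft : IntegrableOn f t μ)
    (hf : ∀ x, 0 < f x) (hμ : 0 < μ (t \ s)) :
    ∫ x in s, f x ∂μ < ∫ x in t, f x ∂μ := by
  have hsupp : Function.support f = univ := eq_univ_of_forall fun x => (hf x).ne'
  have hdiff : 0 < ∫ x in t \ s, f x ∂μ := by
    rwa [setIntegral_pos_iff_support_of_nonneg_ae (ae_of_all _ fun x => (hf x).le)
      (hft.mono_set sdiff_subset), hsupp, univ_inter]
  rw [setIntegral_sdiff hs hft hst] at hdiff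
  exact sub_pos.mp hdiff

theorem volume_pi_Icc_pos {ι : Type*} [Fintype ι] {l u : ι → ℝ} (h : ∀ i, l i < u i) :
    0 < volume (Icc l u) := by
  rw [Real.volume_Icc_pi, CanonicallyOrderedAdd.prod_pos]
  exact fun i _ => ENNReal.ofReal_pos.2 (sub_pos.2 (h i))

section domClosure

variable {n : ℕ} {A B : Set (Fin n → ℝ)}

theorem domClosure_eq_Ici_inter_lowerClosure (A : Set (Fin n → ℝ)) :
    domClosure A = Ici 0 ∩ lowerClosure A := by
  ext x
  simp [domClosure, Pi.le_def]

theorem IsCompact.domClosure (hA : IsCompact A) : IsCompact (domClosure A) := by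
  obtain ⟨M, hM⟩ := hA.isBounded.bddAbove
  rw [domClosure_eq_Ici_inter_lowerClosure]
  refine (isCompact_Icc (a := 0) (b := M)).of_isClosed_subset
    (isClosed_Ici.inter (hA.isClosed.lowerClosure_pi hA.isBounded.bddAbove)) ?_
  rintro x ⟨hx0, a, ha, hxa⟩
  exact ⟨hx0, hxa.trans (hM ha)⟩

theorem domClosure_subset_of_weaklyDominates (h : weaklyDominates A B) :
    domClosure B ⊆ domClosure A := by
  rintro x ⟨hx0, b, hb, hxb⟩
  obtain ⟨a, ha, hba⟩ := h b hb
  exact ⟨hx0, a, ha, fun i => (hxb i).trans (hba i)⟩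

theorem Icc_subset_domClosure {l a : Fin n → ℝ} (hl : ∀ i, 0 ≤ l i) (ha : a ∈ A) :
    Icc l a ⊆ domClosure A :=
  fun _ hx => ⟨fun i => (hl i).trans (hx.1 i), a, ha, hx.2⟩

end domClosure

theorem integral_strict_mono_of_strong_dominance_general {n : ℕ} (A B : Set (Fin n → ℝ))
    (hAc : IsCompact A) (hBc : IsCompact B)
    (hdom : weaklyDominates A B)
    (hstrong : ∃ a ∈ A, ∃ ε > (0 : ℝ),
      (∀ i, 0 ≤ a i - ε) ∧
      Set.Icc (fun i => a i - ε) a ∩ domClosure B = ∅)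
    (f : (Fin n → ℝ) → ℝ) (hfc : Continuous f) (hfpos : ∀ x, 0 < f x) :
    ∫ x in domClosure B, f x < ∫ x in domClosure A, f x := by
  obtain ⟨a, haA, ε, hε, hcube_nonneg, hcube_disj⟩ := hstrong
  refine setIntegral_lt_setIntegral_of_subset (domClosure_subset_of_weaklyDominates hdom)
    hBc.domClosure.isClosed.measurableSet (hfc.continuousOn.integrableOn_compact hAc.domClosure)
    hfpos ?_
  calc 0 < volume (Icc (fun i => a i - ε) a) := volume_pi_Icc_pos fun i => sub_lt_self _ hε
    _ ≤ volume (domClosure A \ domClosure B) := measure_mono fun x hx =>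
      ⟨Icc_subset_domClosure hcube_nonneg haA hx,
        fun hxB => eq_empty_iff_forall_notMem.mp hcube_disj x ⟨hx, hxB⟩⟩

theorem integral_strict_mono_of_strong_dominance {n : ℕ} (A B : Set (Fin n → ℝ))
    (hA : A ⊆ {x | ∀ i, 0 ≤ x i}) (hB : B ⊆ {x | ∀ i, 0 ≤ x i})
    (hAne : A.Nonempty) (hBne : B.Nonempty)
    (hAc : IsCompact A) (hBc : IsCompact B)
    (hdom : weaklyDominates A B)
    (hstrong : ∃ a ∈ A, ∃ ε > (0 : ℝ),
      (∀ i, 0 ≤ a i - ε) ∧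
      Set.Icc (fun i => a i - ε) a ∩ domClosure B = ∅)
    (f : (Fin n → ℝ) → ℝ) (hfc : Continuous f) (hfpos : ∀ x, 0 < f x) :
    ∫ x in domClosure B, f x < ∫ x in domClosure A, f x :=
  integral_strict_mono_of_strong_dominance_general A B hAc hBc hdom hstrong f hfc hfpos
end

section
/- Let A be a nonempty compact subset of the nonnegative orthant of R^n such that its Pareto frontier P(A) is closed (hence compact). Then P(A) is nonempty, and for any nonnegative measurable f, ∫_{A^D} f dx = ∫_{P(A)^D} f dx. -/
open Set MeasureTheory

/-- The Pareto frontier: points of `A` not strictly dominated by any point of `A`. -/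
def paretoFront {n : ℕ} (A : Set (Fin n → ℝ)) : Set (Fin n → ℝ) :=
  {a ∈ A | ¬ ∃ b ∈ A, (∀ i, a i ≤ b i) ∧ ∃ j, a j < b j}

theorem pareto_closed_integral_eq {n : ℕ} (A : Set (Fin n → ℝ))
    (hA : A ⊆ {x | ∀ i, 0 ≤ x i}) (hne : A.Nonempty) (hcomp : IsCompact A)
    (hPclosed : IsClosed (paretoFront A)) :
    (paretoFront A).Nonempty ∧
    ∀ f : (Fin n → ℝ) → ENNReal, Measurable f →
      ∫⁻ x in domClosure A, f x = ∫⁻ x in domClosure (paretoFront A), f x := by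
  have key : ∀ a ∈ A, ∃ p ∈ paretoFront A, ∀ i, a i ≤ p i := by
    intro a ha
    set B : Set (Fin n → ℝ) := {b ∈ A | ∀ i, a i ≤ b i} with hB
    have hBcomp : IsCompact B := by
      apply hcomp.inter_right
      have : {b : Fin n → ℝ | ∀ i, a i ≤ b i} = ⋂ i, {b | a i ≤ b i} := by
        ext b; simp [Set.mem_iInter]
      show IsClosed {b : Fin n → ℝ | ∀ i, a i ≤ b i}
      rw [this]
      exact isClosed_iInter fun i =>
        isClosed_le continuous_const (continuous_apply i)
    have hBne : B.Nonempty := ⟨a, ha, fun i => le_refl _⟩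
    obtain ⟨p, hpB, hmax⟩ := hBcomp.exists_isMaxOn hBne
      (Continuous.continuousOn (by continuity : Continuous fun b : Fin n → ℝ => ∑ i, b i))
    refine ⟨p, ⟨hpB.1, ?_⟩, hpB.2⟩
    rintro ⟨c, hcA, hle, j, hj⟩
    have hcB : c ∈ B := ⟨hcA, fun i => le_trans (hpB.2 i) (hle i)⟩
    have : ∑ i, p i < ∑ i, c i :=
      Finset.sum_lt_sum (fun i _ => hle i) ⟨j, Finset.mem_univ j, hj⟩
    exact absurd (hmax hcB) (not_le.mpr this)
  have hPne : (paretoFront A).Nonempty := by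
    obtain ⟨a, ha⟩ := hne
    obtain ⟨p, hp, _⟩ := key a ha
    exact ⟨p, hp⟩
  have hset : domClosure A = domClosure (paretoFront A) := by
    ext x
    constructor
    · rintro ⟨hx, a, ha, hle⟩
      obtain ⟨p, hp, hap⟩ := key a ha
      exact ⟨hx, p, hp, fun i => le_trans (hle i) (hap i)⟩
    · rintro ⟨hx, p, hp, hle⟩
      exact ⟨hx, p, hp.1, hle⟩
  exact ⟨hPne, fun f _ => by rw [hset]⟩
end
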